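/- arXiv:2112.04398 — 4 statements merged into one kernel-verified Lean document; each statement's English description precedes it below -/
import Mathlib

section
/- The dual Schrödinger objective F is convex on tuples of bounded measurable potentials, and it is strictly convex modulo translations: if φ = (φ_1,…,φ_J) and ψ = (ψ_1,…,ψ_J) are tuples of bounded measurable potentials with F((φ+ψ)/2) = (F(φ) + F(ψ))/2, then there exist real constants λ_1,…,λ_J with λ_1 + ⋯ + λ_J = 0 such that ψ_j = φ_j + λ_j holds μ_j-almost everywhere for every j. -/
/-!
The linear part of `F` is affine along convex combinations, so
`F(tφ + (1-t)ψ) - (tF(φ) + (1-t)F(ψ))` is `ε` times the convexity defect of `exp` integrated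
against `⊗μ_j`; this gives convexity. If the defect vanishes at `t = 1/2`, strict convexity of
`exp` forces `∑_j φ_j(x_j) = ∑_j ψ_j(x_j)` for almost every `x`. The coordinates are independent
under the product measure, so the variances of the `ψ_j - φ_j` add up to the variance of their
sum, which is zero; hence each `ψ_j - φ_j` is `μ_j`-a.e. equal to its mean, and the means sum to
the mean of the sum, zero.
-/

open MeasureTheory ProbabilityTheory Set

/-- The dual Schrödinger objective
`F(φ) = -∑_j ∫ φ_j dμ_j + ε ∫ exp((∑_j φ_j(x_j) - c(x))/ε) d⊗μ_j - ε`. -/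
noncomputable def dualObj {d J : ℕ}
    (X : Fin J → Set (Fin d → ℝ))
    (μ : (j : Fin J) → Measure (X j)) [∀ j, SigmaFinite (μ j)]
    (c : ((j : Fin J) → X j) → ℝ) (ε : ℝ)
    (φ : (j : Fin J) → X j → ℝ) : ℝ :=
  -(∑ j, ∫ x, φ j x ∂(μ j)) +
    ε * ∫ x, Real.exp (((∑ j, φ j (x j)) - c x) / ε) ∂(Measure.pi μ) - ε

/-- A tuple of potentials is admissible if each component is bounded and measurable. -/
def BddMeasTuple {d J : ℕ} (X : Fin J → Set (Fin d → ℝ))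
    (φ : (j : Fin J) → X j → ℝ) : Prop :=
  (∀ j, Measurable (φ j)) ∧ ∀ j, ∃ M, ∀ x, |φ j x| ≤ M

theorem exists_ae_eq_const_of_sum_comp_eval_ae_eq_zero {ι : Type*} [Fintype ι] {E : ι → Type*}
    [∀ i, MeasurableSpace (E i)] {μ : ∀ i, Measure (E i)} [∀ i, IsProbabilityMeasure (μ i)]
    {g : ∀ i, E i → ℝ} (hg : ∀ i, MemLp (g i) 2 (μ i))
    (h : ∀ᵐ x ∂Measure.pi μ, ∑ i, g i (x i) = 0) :
    ∃ lam : ι → ℝ, ∑ i, lam i = 0 ∧ ∀ i, g i =ᵐ[μ i] fun _ => lam i := by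
  set Y : ι → (∀ i, E i) → ℝ := fun i x => g i (x i)
  have hY : ∀ i, MemLp (Y i) 2 (Measure.pi μ) :=
    fun i => (hg i).comp_measurePreserving (measurePreserving_eval μ i)
  have hindep : iIndepFun Y (Measure.pi μ) := iIndepFun_pi fun i => (hg i).aemeasurable
  have hvar_sum : ∑ i, Var[Y i; Measure.pi μ] = 0 := by
    rw [← IndepFun.variance_sum (fun i _ => hY i) fun i _ j _ hij => hindep.indepFun hij,
      variance_congr (Y := 0) (h.mono fun x hx => by simpa using hx), variance_zero]
  have hvar : ∀ i, Var[g i; μ i] = 0 := fun i => by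
    rw [← (measurePreserving_eval μ i).variance_fun_comp (hg i).aemeasurable]
    exact (Finset.sum_eq_zero_iff_of_nonneg fun j _ => variance_nonneg _ _).1 hvar_sum i
      (Finset.mem_univ i)
  refine ⟨fun i => ∫ x, g i x ∂μ i, ?_, fun i => ae_eq_integral_of_variance_eq_zero (hg i) (hvar i)⟩
  calc ∑ i, ∫ x, g i x ∂μ i = ∫ x, ∑ i, Y i x ∂Measure.pi μ := by
        rw [integral_finsetSum _ fun i _ => (hY i).integrable one_le_two]
        exact Finset.sum_congr rfl fun i _ => (integral_comp_eval (hg i).1).symm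
    _ = 0 := by rw [integral_congr_ae h, integral_zero]

section ConvexIntegrand

variable {Ω : Type*} [MeasurableSpace Ω] {ν : Measure Ω} {Φ : ℝ → ℝ} {f g : Ω → ℝ} {t : ℝ}

theorem ConvexOn.integral_comp_convexComb_le (hΦ : ConvexOn ℝ univ Φ) (ht0 : 0 ≤ t)
    (ht1 : t ≤ 1) (hf : Integrable (fun x => Φ (f x)) ν) (hg : Integrable (fun x => Φ (g x)) ν)
    (hfg : Integrable (fun x => Φ (t * f x + (1 - t) * g x)) ν) :
    ∫ x, Φ (t * f x + (1 - t) * g x) ∂ν ≤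
      t * ∫ x, Φ (f x) ∂ν + (1 - t) * ∫ x, Φ (g x) ∂ν := by
  rw [← integral_const_mul, ← integral_const_mul,
    ← integral_add (hf.const_mul t) (hg.const_mul (1 - t))]
  exact integral_mono hfg ((hf.const_mul t).add (hg.const_mul (1 - t))) fun x =>
    hΦ.2 (mem_univ (f x)) (mem_univ (g x)) ht0 (sub_nonneg.2 ht1) (add_sub_cancel t 1)

theorem StrictConvexOn.ae_eq_of_integral_comp_convexComb_eq (hΦ : StrictConvexOn ℝ univ Φ)
    (ht0 : 0 < t) (ht1 : t < 1) (hf : Integrable (fun x => Φ (f x)) ν)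
    (hg : Integrable (fun x => Φ (g x)) ν)
    (hfg : Integrable (fun x => Φ (t * f x + (1 - t) * g x)) ν)
    (h : ∫ x, Φ (t * f x + (1 - t) * g x) ∂ν =
      t * ∫ x, Φ (f x) ∂ν + (1 - t) * ∫ x, Φ (g x) ∂ν) :
    f =ᵐ[ν] g := by
  have hcomb : Integrable (fun x => t * Φ (f x) + (1 - t) * Φ (g x)) ν :=
    (hf.const_mul t).fun_add (hg.const_mul (1 - t))
  set defect : Ω → ℝ := fun x => t * Φ (f x) + (1 - t) * Φ (g x) - Φ (t * f x + (1 - t) * g x)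
  have hdefect_nonneg : 0 ≤ defect := fun x => sub_nonneg.2 <|
    hΦ.convexOn.2 (mem_univ (f x)) (mem_univ (g x)) ht0.le (sub_pos.2 ht1).le (add_sub_cancel t 1)
  have hdefect_zero : ∫ x, defect x ∂ν = 0 := by
    rw [integral_sub hcomb hfg, integral_add (hf.const_mul t) (hg.const_mul (1 - t)),
      integral_const_mul, integral_const_mul, h, sub_self]
  filter_upwards [(integral_eq_zero_iff_of_nonneg hdefect_nonneg (hcomb.sub hfg)).1 hdefect_zero]
    with x hx
  by_contra hne
  exact (sub_pos.2 (hΦ.2 (mem_univ (f x)) (mem_univ (g x)) hne ht0 (sub_pos.2 ht1)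
    (add_sub_cancel t 1))).ne' hx

end ConvexIntegrand

section DualObjective

variable {d J : ℕ} {X : Fin J → Set (Fin d → ℝ)} {μ : (j : Fin J) → Measure (X j)}
  {c : ((j : Fin J) → X j) → ℝ} {ε t : ℝ} {φ ψ : (j : Fin J) → X j → ℝ}

noncomputable def dualExponent (c : ((j : Fin J) → X j) → ℝ) (ε : ℝ) (φ : (j : Fin J) → X j → ℝ)
    (x : (j : Fin J) → X j) : ℝ :=
  ((∑ j, φ j (x j)) - c x) / ε

theorem dualObj_eq [∀ j, SigmaFinite (μ j)] :
    dualObj X μ c ε φ =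
      -(∑ j, ∫ x, φ j x ∂μ j) + ε * ∫ x, Real.exp (dualExponent c ε φ x) ∂Measure.pi μ - ε :=
  rfl

theorem dualExponent_convexComb (x : (j : Fin J) → X j) :
    dualExponent c ε (fun j y => t * φ j y + (1 - t) * ψ j y) x =
      t * dualExponent c ε φ x + (1 - t) * dualExponent c ε ψ x := by
  simp only [dualExponent, Finset.sum_add_distrib, ← Finset.mul_sum]
  ring

theorem BddMeasTuple.convexComb (hφ : BddMeasTuple X φ) (hψ : BddMeasTuple X ψ) (a b : ℝ) :
    BddMeasTuple X (fun j x => a * φ j x + b * ψ j x) := by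
  refine ⟨fun j => ((hφ.1 j).const_mul a).add ((hψ.1 j).const_mul b), fun j => ?_⟩
  obtain ⟨Mφ, hMφ⟩ := hφ.2 j
  obtain ⟨Mψ, hMψ⟩ := hψ.2 j
  refine ⟨|a| * Mφ + |b| * Mψ, fun x => ?_⟩
  calc |a * φ j x + b * ψ j x| ≤ |a| * |φ j x| + |b| * |ψ j x| := by
        simpa only [abs_mul] using abs_add_le (a * φ j x) (b * ψ j x)
    _ ≤ |a| * Mφ + |b| * Mψ := by gcongr <;> simp only [hMφ, hMψ]

theorem BddMeasTuple.memLp [∀ j, IsFiniteMeasure (μ j)] (hφ : BddMeasTuple X φ) (p : ENNReal)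
    (j : Fin J) : MemLp (φ j) p (μ j) :=
  let ⟨M, hM⟩ := hφ.2 j
  .of_bound (hφ.1 j).aestronglyMeasurable M (.of_forall hM)

theorem BddMeasTuple.integrable_exp_dualExponent [∀ j, IsFiniteMeasure (μ j)]
    (hc : Measurable c) (hc_bdd : ∃ M, ∀ x, |c x| ≤ M) (hφ : BddMeasTuple X φ) :
    Integrable (fun x => Real.exp (dualExponent c ε φ x)) (Measure.pi μ) := by
  choose M hM using hφ.2
  obtain ⟨Mc, hMc⟩ := hc_bdd
  have hmeas : Measurable (dualExponent c ε φ) :=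
    ((Finset.measurable_sum _ fun j _ => (hφ.1 j).comp (measurable_pi_apply j)).sub hc).div_const ε
  refine .of_bound (Real.measurable_exp.comp hmeas).aestronglyMeasurable
    (Real.exp ((∑ j, M j + Mc) / |ε|)) (.of_forall fun x => ?_)
  have hsum : |(∑ j, φ j (x j)) - c x| ≤ ∑ j, M j + Mc :=
    (abs_sub _ _).trans (add_le_add
      ((Finset.abs_sum_le_sum_abs _ _).trans (Finset.sum_le_sum fun j _ => hM j (x j))) (hMc x))
  rw [Real.norm_eq_abs, Real.abs_exp, Real.exp_le_exp]
  calc dualExponent c ε φ x ≤ |dualExponent c ε φ x| := le_abs_self _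
    _ = |(∑ j, φ j (x j)) - c x| / |ε| := abs_div _ _
    _ ≤ (∑ j, M j + Mc) / |ε| := div_le_div_of_nonneg_right hsum (abs_nonneg ε)

theorem BddMeasTuple.integrable_exp_convexComb_dualExponent [∀ j, IsFiniteMeasure (μ j)]
    (hc : Measurable c) (hc_bdd : ∃ M, ∀ x, |c x| ≤ M) (hφ : BddMeasTuple X φ)
    (hψ : BddMeasTuple X ψ) (t : ℝ) :
    Integrable (fun x => Real.exp (t * dualExponent c ε φ x + (1 - t) * dualExponent c ε ψ x))
      (Measure.pi μ) := by
  simpa only [dualExponent_convexComb] using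
    (hφ.convexComb hψ t (1 - t)).integrable_exp_dualExponent (ε := ε) hc hc_bdd

theorem sum_integral_convexComb (hφ : ∀ j, Integrable (φ j) (μ j))
    (hψ : ∀ j, Integrable (ψ j) (μ j)) :
    ∑ j, ∫ x, (t * φ j x + (1 - t) * ψ j x) ∂μ j =
      t * ∑ j, ∫ x, φ j x ∂μ j + (1 - t) * ∑ j, ∫ x, ψ j x ∂μ j := by
  simp only [Finset.mul_sum, ← Finset.sum_add_distrib]
  refine Finset.sum_congr rfl fun j _ => ?_
  rw [integral_add ((hφ j).const_mul t) ((hψ j).const_mul (1 - t)), integral_const_mul,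
    integral_const_mul]

theorem dualObj_convexComb_sub [∀ j, SigmaFinite (μ j)] (hφ : ∀ j, Integrable (φ j) (μ j))
    (hψ : ∀ j, Integrable (ψ j) (μ j)) :
    dualObj X μ c ε (fun j x => t * φ j x + (1 - t) * ψ j x) -
        (t * dualObj X μ c ε φ + (1 - t) * dualObj X μ c ε ψ) =
      ε * (∫ x, Real.exp (t * dualExponent c ε φ x + (1 - t) * dualExponent c ε ψ x)
            ∂Measure.pi μ -
          (t * ∫ x, Real.exp (dualExponent c ε φ x) ∂Measure.pi μ +
            (1 - t) * ∫ x, Real.exp (dualExponent c ε ψ x) ∂Measure.pi μ)) := by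
  simp only [dualObj_eq, dualExponent_convexComb, sum_integral_convexComb hφ hψ]
  ring

theorem dualObj_convexComb_le [∀ j, IsFiniteMeasure (μ j)] (hc : Measurable c)
    (hc_bdd : ∃ M, ∀ x, |c x| ≤ M) (hε : 0 ≤ ε) (hφ : BddMeasTuple X φ) (hψ : BddMeasTuple X ψ)
    (ht0 : 0 ≤ t) (ht1 : t ≤ 1) :
    dualObj X μ c ε (fun j x => t * φ j x + (1 - t) * ψ j x) ≤
      t * dualObj X μ c ε φ + (1 - t) * dualObj X μ c ε ψ := by
  have hexp := convexOn_exp.integral_comp_convexComb_le ht0 ht1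
    (hφ.integrable_exp_dualExponent (μ := μ) (ε := ε) hc hc_bdd)
    (hψ.integrable_exp_dualExponent hc hc_bdd)
    (hφ.integrable_exp_convexComb_dualExponent hc hc_bdd hψ t)
  have hgap := dualObj_convexComb_sub (μ := μ) (c := c) (ε := ε) (t := t)
    (fun j => (hφ.memLp 1 j).integrable le_rfl) (fun j => (hψ.memLp 1 j).integrable le_rfl)
  exact sub_nonpos.1 (hgap ▸ mul_nonpos_of_nonneg_of_nonpos hε (sub_nonpos.2 hexp))

theorem dualExponent_ae_eq_of_dualObj_convexComb_eq [∀ j, IsFiniteMeasure (μ j)]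
    (hc : Measurable c) (hc_bdd : ∃ M, ∀ x, |c x| ≤ M) (hε : ε ≠ 0) (hφ : BddMeasTuple X φ)
    (hψ : BddMeasTuple X ψ) (ht0 : 0 < t) (ht1 : t < 1)
    (h : dualObj X μ c ε (fun j x => t * φ j x + (1 - t) * ψ j x) =
      t * dualObj X μ c ε φ + (1 - t) * dualObj X μ c ε ψ) :
    dualExponent c ε φ =ᵐ[Measure.pi μ] dualExponent c ε ψ := by
  have hgap := dualObj_convexComb_sub (μ := μ) (c := c) (ε := ε) (t := t)
    (fun j => (hφ.memLp 1 j).integrable le_rfl) (fun j => (hψ.memLp 1 j).integrable le_rfl)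
  rw [h, sub_self, eq_comm, mul_eq_zero, sub_eq_zero] at hgap
  exact strictConvexOn_exp.ae_eq_of_integral_comp_convexComb_eq ht0 ht1
    (hφ.integrable_exp_dualExponent (μ := μ) (ε := ε) hc hc_bdd)
    (hψ.integrable_exp_dualExponent hc hc_bdd)
    (hφ.integrable_exp_convexComb_dualExponent hc hc_bdd hψ t)
    (hgap.resolve_left hε)

end DualObjective

theorem dualObj_convex_and_strictly_convex_mod_translations_general
    {d J : ℕ}
    (X : Fin J → Set (Fin d → ℝ))
    (μ : (j : Fin J) → Measure (X j)) [∀ j, IsProbabilityMeasure (μ j)]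
    (c : ((j : Fin J) → X j) → ℝ)
    (hc_cont : Continuous c) (hc_bdd : ∃ M, ∀ x, |c x| ≤ M)
    (ε : ℝ) (hε : 0 < ε) :
    (∀ (φ ψ : (j : Fin J) → X j → ℝ), BddMeasTuple X φ → BddMeasTuple X ψ →
      ∀ t : ℝ, 0 ≤ t → t ≤ 1 →
        dualObj X μ c ε (fun j x => t * φ j x + (1 - t) * ψ j x) ≤
          t * dualObj X μ c ε φ + (1 - t) * dualObj X μ c ε ψ) ∧
    (∀ (φ ψ : (j : Fin J) → X j → ℝ), BddMeasTuple X φ → BddMeasTuple X ψ →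
      dualObj X μ c ε (fun j x => (φ j x + ψ j x) / 2) =
        (dualObj X μ c ε φ + dualObj X μ c ε ψ) / 2 →
      ∃ lam : Fin J → ℝ, (∑ j, lam j) = 0 ∧
        ∀ j, ψ j =ᵐ[μ j] fun x => φ j x + lam j) := by
  have hc := hc_cont.measurable
  refine ⟨fun φ ψ hφ hψ t ht0 ht1 => dualObj_convexComb_le hc hc_bdd hε.le hφ hψ ht0 ht1,
    fun φ ψ hφ hψ hmid => ?_⟩
  have hmid_half : dualObj X μ c ε (fun j x => 1 / 2 * φ j x + (1 - 1 / 2) * ψ j x) =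
      1 / 2 * dualObj X μ c ε φ + (1 - 1 / 2) * dualObj X μ c ε ψ := by
    convert hmid using 2
    · funext j x; ring
    · ring
  have hsum : ∀ᵐ x ∂Measure.pi μ, ∑ j, (ψ j - φ j) (x j) = 0 := by
    filter_upwards [dualExponent_ae_eq_of_dualObj_convexComb_eq hc hc_bdd hε.ne' hφ hψ
      (by norm_num) (by norm_num) hmid_half] with x hx
    rw [dualExponent, dualExponent, div_left_inj' hε.ne', sub_left_inj] at hx
    simp only [Pi.sub_apply, Finset.sum_sub_distrib, hx, sub_self]
  obtain ⟨lam, hlam, hconst⟩ := exists_ae_eq_const_of_sum_comp_eval_ae_eq_zero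
    (fun j => (hψ.memLp 2 j).sub (hφ.memLp 2 j)) hsum
  refine ⟨lam, hlam, fun j => (hconst j).mono fun x hx => ?_⟩
  simp only [Pi.sub_apply, sub_eq_iff_eq_add'] at hx
  exact hx

/-- The dual Schrödinger objective is convex on tuples of bounded
measurable potentials, and strictly convex modulo translations: equality in the
midpoint convexity inequality forces the two tuples of potentials to differ by
constants `lam j` summing to zero, `μ j`-almost everywhere. -/
theorem dualObj_convex_and_strictly_convex_mod_translations
    {d J : ℕ} (hJ : 2 ≤ J)
    (X : Fin J → Set (Fin d → ℝ)) (hX : ∀ j, IsCompact (X j))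
    (μ : (j : Fin J) → Measure (X j)) [∀ j, IsProbabilityMeasure (μ j)]
    (c : ((j : Fin J) → X j) → ℝ)
    (hc_cont : Continuous c) (hc_bdd : ∃ M, ∀ x, |c x| ≤ M)
    (ε : ℝ) (hε : 0 < ε) :
    (∀ (φ ψ : (j : Fin J) → X j → ℝ), BddMeasTuple X φ → BddMeasTuple X ψ →
      ∀ t : ℝ, 0 ≤ t → t ≤ 1 →
        dualObj X μ c ε (fun j x => t * φ j x + (1 - t) * ψ j x) ≤
          t * dualObj X μ c ε φ + (1 - t) * dualObj X μ c ε ψ) ∧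
    (∀ (φ ψ : (j : Fin J) → X j → ℝ), BddMeasTuple X φ → BddMeasTuple X ψ →
      dualObj X μ c ε (fun j x => (φ j x + ψ j x) / 2) =
        (dualObj X μ c ε φ + dualObj X μ c ε ψ) / 2 →
      ∃ lam : Fin J → ℝ, (∑ j, lam j) = 0 ∧
        ∀ j, ψ j =ᵐ[μ j] fun x => φ j x + lam j) :=
  dualObj_convex_and_strictly_convex_mod_translations_general X μ c hc_cont hc_bdd ε hε
end

section
/- If φ = (φ_1,…,φ_J) and ψ = (ψ_1,…,ψ_J) are both minimizers of the dual Schrödinger objective F over tuples of bounded measurable potentials, then there exist real constants λ_1,…,λ_J with λ_1 + ⋯ + λ_J = 0 such that ψ_j = φ_j + λ_j holds μ_j-almost everywhere for every j. Consequently F has at most one minimizer (up to μ_j-null sets) satisfying the normalization ∫_{X_j} φ_j dμ_j = 0 for j = 1,…,J−1. -/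
open MeasureTheory

/-!
Averaging the minimality of `φ` and `ψ` against their midpoint `χ = (φ + ψ) / 2` gives
`F φ + F ψ ≤ 2 F χ`. The linear part of `F` cancels in this inequality, and what remains says that
the integral of the convexity gap `e^A + e^B - 2 e^{(A+B)/2} = (e^{A/2} - e^{B/2})²` of the
exponential term is nonpositive, so `A = B` a.e., i.e. `∑ⱼ (ψⱼ - φⱼ)(xⱼ) = 0` for `⊗μⱼ`-a.e. `x`.
The coordinates are independent under the product measure, so the variance of this sum is the sum
of the variances of the `ψⱼ - φⱼ`; hence each `ψⱼ - φⱼ` is a.e. a constant `λⱼ`, and integrating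
the sum gives `∑ⱼ λⱼ = 0`.
-/
open ProbabilityTheory Real

open scoped ENNReal

section ProductSpace

variable {ι : Type*} [Fintype ι] {α : ι → Type*} [∀ i, MeasurableSpace (α i)]
  {μ : ∀ i, Measure (α i)} [∀ i, IsProbabilityMeasure (μ i)] {g : ∀ i, α i → ℝ}

theorem sum_integral_eq_zero_of_ae_sum_eq_zero (hg : ∀ i, Integrable (g i) (μ i))
    (h : (fun x => ∑ i, g i (x i)) =ᵐ[Measure.pi μ] 0) :
    ∑ i, ∫ y, g i y ∂μ i = 0 := by
  have := integral_congr_ae h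
  rwa [integral_finsetSum _ fun i _ => integrable_comp_eval (hg i), Pi.zero_def,
    integral_zero, Finset.sum_congr rfl fun i _ =>
      integral_comp_eval (hg i).aestronglyMeasurable] at this

theorem ae_eq_integral_of_ae_sum_eq_zero (hg : ∀ i, MemLp (g i) 2 (μ i))
    (h : (fun x => ∑ i, g i (x i)) =ᵐ[Measure.pi μ] 0) (i : ι) :
    g i =ᵐ[μ i] fun _ => ∫ y, g i y ∂μ i := by
  have hvar : ∑ i, Var[g i; μ i] = 0 := by
    rw [← variance_sum_pi hg, variance_congr (by simpa only [Finset.sum_fn] using h),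
      variance_zero]
  have hvar_i := (Finset.sum_eq_zero_iff_of_nonneg fun i _ => variance_nonneg _ _).1 hvar i
    (Finset.mem_univ i)
  exact ae_eq_integral_of_variance_eq_zero (hg i) hvar_i

end ProductSpace

theorem exp_add_exp_sub_two_mul_exp_midpoint (a b : ℝ) :
    exp a + exp b - 2 * exp ((a + b) / 2) = (exp (a / 2) - exp (b / 2)) ^ 2 := by
  have ha : exp a = exp (a / 2) ^ 2 := by rw [← exp_nat_mul]; ring_nf
  have hb : exp b = exp (b / 2) ^ 2 := by rw [← exp_nat_mul]; ring_nf
  rw [ha, hb, add_div, exp_add]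
  ring

theorem ae_eq_of_integral_exp_add_le_two_mul {β : Type*} [MeasurableSpace β] {ν : Measure β}
    {u v : β → ℝ} (hu : Integrable (fun x => exp (u x)) ν)
    (hv : Integrable (fun x => exp (v x)) ν)
    (huv : Integrable (fun x => exp ((u x + v x) / 2)) ν)
    (h : ∫ x, exp (u x) ∂ν + ∫ x, exp (v x) ∂ν ≤ 2 * ∫ x, exp ((u x + v x) / 2) ∂ν) :
    u =ᵐ[ν] v := by
  set gap : β → ℝ := fun x => exp (u x) + exp (v x) - 2 * exp ((u x + v x) / 2)
  have hgap_nonneg : 0 ≤ gap := fun x => by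
    simp only [gap, exp_add_exp_sub_two_mul_exp_midpoint]; positivity
  have huv_sum : Integrable (fun x => exp (u x) + exp (v x)) ν := hu.add hv
  have hgap_int : Integrable gap ν := huv_sum.sub (huv.const_mul 2)
  have hgap_zero : ∫ x, gap x ∂ν = 0 := by
    refine le_antisymm ?_ (integral_nonneg hgap_nonneg)
    simp only [gap]
    rw [integral_sub huv_sum (huv.const_mul 2), integral_add hu hv, integral_const_mul]
    linarith
  filter_upwards [(integral_eq_zero_iff_of_nonneg hgap_nonneg hgap_int).1 hgap_zero] with x hx
  simp only [gap, Pi.zero_apply, exp_add_exp_sub_two_mul_exp_midpoint, sq_eq_zero_iff,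
    sub_eq_zero, exp_eq_exp] at hx
  linarith

theorem sum_midpoint_sub_div {ι : Type*} [Fintype ι] (f g : ι → ℝ) (a ε : ℝ) :
    (∑ i, (f i + g i) / 2 - a) / ε = ((∑ i, f i - a) / ε + (∑ i, g i - a) / ε) / 2 := by
  rw [← Finset.sum_div, Finset.sum_add_distrib]
  ring

theorem eq_zero_of_sum_eq_zero_of_forall_lt_pred {M : Type*} [AddCommMonoid M] {n : ℕ}
    {f : Fin n → M} (hsum : ∑ i, f i = 0) (h : ∀ i : Fin n, (i : ℕ) < n - 1 → f i = 0)
    (i : Fin n) : f i = 0 := by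
  by_cases hi : (i : ℕ) < n - 1
  · exact h i hi
  · rw [← hsum, Fintype.sum_eq_single i fun k hk => h k (by grind)]

section DualObjective

variable {d J : ℕ} {X : Fin J → Set (Fin d → ℝ)} {μ : (j : Fin J) → Measure (X j)}
  {c : ((j : Fin J) → X j) → ℝ} {ε : ℝ} {φ ψ : (j : Fin J) → X j → ℝ}

namespace BddMeasTuple

theorem memLp_s2 [∀ j, IsFiniteMeasure (μ j)] (hφ : BddMeasTuple X φ) (j : Fin J) (p : ℝ≥0∞) :
    MemLp (φ j) p (μ j) := by
  obtain ⟨M, hM⟩ := hφ.2 j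
  exact MemLp.of_bound (hφ.1 j).aestronglyMeasurable M (ae_of_all _ hM)

theorem integrable [∀ j, IsFiniteMeasure (μ j)] (hφ : BddMeasTuple X φ) (j : Fin J) :
    Integrable (φ j) (μ j) :=
  memLp_one_iff_integrable.1 (hφ.memLp_s2 j 1)

theorem midpoint (hφ : BddMeasTuple X φ) (hψ : BddMeasTuple X ψ) :
    BddMeasTuple X fun j x => (φ j x + ψ j x) / 2 := by
  refine ⟨fun j => ((hφ.1 j).add (hψ.1 j)).div_const 2, fun j => ?_⟩
  obtain ⟨M, hM⟩ := hφ.2 j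
  obtain ⟨N, hN⟩ := hψ.2 j
  refine ⟨(M + N) / 2, fun x => ?_⟩
  rw [abs_div, abs_two]
  gcongr
  exact (abs_add_le _ _).trans (add_le_add (hM x) (hN x))

theorem integrable_exp [∀ j, IsFiniteMeasure (μ j)] (hφ : BddMeasTuple X φ) (hc : Measurable c)
    {m : ℝ} (hc_ge : ∀ x, m ≤ c x) (hε : 0 < ε) :
    Integrable (fun x => exp ((∑ j, φ j (x j) - c x) / ε)) (Measure.pi μ) := by
  choose M hM using hφ.2
  have hmeas : Measurable fun x : (j : Fin J) → X j => (∑ j, φ j (x j) - c x) / ε :=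
    ((Finset.measurable_sum _ fun j _ => (hφ.1 j).comp (measurable_pi_apply j)).sub hc).div_const ε
  refine Integrable.of_bound hmeas.exp.aestronglyMeasurable (exp ((∑ j, M j - m) / ε))
    (ae_of_all _ fun x => ?_)
  rw [norm_of_nonneg (exp_pos _).le, exp_le_exp]
  gcongr with j
  · exact le_of_abs_le (hM j (x j))
  · exact hc_ge x

end BddMeasTuple

theorem dualObj_add_sub_two_mul_dualObj_midpoint [∀ j, IsFiniteMeasure (μ j)]
    (hφ : BddMeasTuple X φ) (hψ : BddMeasTuple X ψ) :
    dualObj X μ c ε φ + dualObj X μ c ε ψ - 2 * dualObj X μ c ε (fun j x => (φ j x + ψ j x) / 2) =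
      ε * (∫ x, exp ((∑ j, φ j (x j) - c x) / ε) ∂Measure.pi μ +
        ∫ x, exp ((∑ j, ψ j (x j) - c x) / ε) ∂Measure.pi μ -
        2 * ∫ x, exp (((∑ j, φ j (x j) - c x) / ε + (∑ j, ψ j (x j) - c x) / ε) / 2)
          ∂Measure.pi μ) := by
  have hlin : ∀ j, ∫ x, (φ j x + ψ j x) / 2 ∂μ j = (∫ x, φ j x ∂μ j + ∫ x, ψ j x ∂μ j) / 2 :=
    fun j => by
      rw [integral_div, integral_add (hφ.integrable j) (hψ.integrable j)]
  simp only [dualObj, hlin, sum_midpoint_sub_div]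
  rw [← Finset.sum_div, Finset.sum_add_distrib]
  ring

theorem ae_sum_sub_eq_zero_of_dualObj_add_le [∀ j, IsFiniteMeasure (μ j)] (hc : Measurable c)
    {m : ℝ} (hc_ge : ∀ x, m ≤ c x) (hε : 0 < ε) (hφ : BddMeasTuple X φ) (hψ : BddMeasTuple X ψ)
    (h : dualObj X μ c ε φ + dualObj X μ c ε ψ ≤
      2 * dualObj X μ c ε (fun j x => (φ j x + ψ j x) / 2)) :
    (fun x => ∑ j, (ψ j (x j) - φ j (x j))) =ᵐ[Measure.pi μ] 0 := by
  have hmid := (hφ.midpoint hψ).integrable_exp (μ := μ) hc hc_ge hε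
  simp only [sum_midpoint_sub_div] at hmid
  have hgap_nonpos := nonpos_of_mul_nonpos_right
    ((dualObj_add_sub_two_mul_dualObj_midpoint (μ := μ) (c := c) hφ hψ).symm.trans_le
      (sub_nonpos.2 h)) hε
  have hexp := ae_eq_of_integral_exp_add_le_two_mul (hφ.integrable_exp hc hc_ge hε)
    (hψ.integrable_exp hc hc_ge hε) hmid (by linarith)
  filter_upwards [hexp] with x hx
  rw [div_left_inj' hε.ne', sub_left_inj] at hx
  simp [Finset.sum_sub_distrib, hx]

end DualObjective

theorem dualObj_minimizers_unique_up_to_translation_general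
    {d J : ℕ}
    (X : Fin J → Set (Fin d → ℝ))
    (μ : (j : Fin J) → Measure (X j)) [∀ j, IsProbabilityMeasure (μ j)]
    (c : ((j : Fin J) → X j) → ℝ)
    (hc_cont : Continuous c) (hc_bdd : ∃ M, ∀ x, |c x| ≤ M)
    (ε : ℝ) (hε : 0 < ε)
    (φ ψ : (j : Fin J) → X j → ℝ)
    (hφ : BddMeasTuple X φ) (hψ : BddMeasTuple X ψ)
    (hφmin : ∀ χ, BddMeasTuple X χ → dualObj X μ c ε φ ≤ dualObj X μ c ε χ)
    (hψmin : ∀ χ, BddMeasTuple X χ → dualObj X μ c ε ψ ≤ dualObj X μ c ε χ) :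
    (∃ lam : Fin J → ℝ, (∑ j, lam j) = 0 ∧
        ∀ j, ψ j =ᵐ[μ j] fun x => φ j x + lam j) ∧
    ((∀ j : Fin J, (j : ℕ) < J - 1 → ∫ x, φ j x ∂(μ j) = 0) →
      (∀ j : Fin J, (j : ℕ) < J - 1 → ∫ x, ψ j x ∂(μ j) = 0) →
      ∀ j, ψ j =ᵐ[μ j] φ j) := by
  obtain ⟨M, hM⟩ := hc_bdd
  have hχ := hφ.midpoint hψ
  have hsum := ae_sum_sub_eq_zero_of_dualObj_add_le hc_cont.measurable
    (fun x => neg_le_of_abs_le (hM x)) hε hφ hψ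
    ((add_le_add (hφmin _ hχ) (hψmin _ hχ)).trans_eq (two_mul _).symm)
  have hg : ∀ j, MemLp (fun y => ψ j y - φ j y) 2 (μ j) :=
    fun j => (hψ.memLp_s2 j 2).sub (hφ.memLp_s2 j 2)
  set lam : Fin J → ℝ := fun j => ∫ y, (ψ j y - φ j y) ∂μ j
  have hψ_eq : ∀ j, ψ j =ᵐ[μ j] fun x => φ j x + lam j := fun j =>
    (ae_eq_integral_of_ae_sum_eq_zero hg hsum j).mono fun y (hy : ψ j y - φ j y = lam j) => by
      simp only [← hy, add_sub_cancel]
  have hlam_sum : ∑ j, lam j = 0 :=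
    sum_integral_eq_zero_of_ae_sum_eq_zero (fun j => (hψ.integrable j).sub (hφ.integrable j)) hsum
  refine ⟨⟨lam, hlam_sum, hψ_eq⟩, fun hφ0 hψ0 j => ?_⟩
  have hlam_zero : lam j = 0 := eq_zero_of_sum_eq_zero_of_forall_lt_pred hlam_sum
    (fun k hk => by
      simp only [lam, integral_sub (hψ.integrable k) (hφ.integrable k), hφ0 k hk, hψ0 k hk,
        sub_zero]) j
  filter_upwards [hψ_eq j] with y hy
  rw [hy, hlam_zero, add_zero]

/-- Any two minimizers of the dual Schrödinger objective over
bounded measurable potentials differ by constants `lam j` summing to zero,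
`μ j`-almost everywhere; consequently, under the normalization
`∫ φ_j dμ_j = 0` for `j = 1,…,J-1`, the minimizer is unique up to `μ j`-null sets. -/
theorem dualObj_minimizers_unique_up_to_translation
    {d J : ℕ} (hJ : 2 ≤ J)
    (X : Fin J → Set (Fin d → ℝ)) (hX : ∀ j, IsCompact (X j))
    (μ : (j : Fin J) → Measure (X j)) [∀ j, IsProbabilityMeasure (μ j)]
    (c : ((j : Fin J) → X j) → ℝ)
    (hc_cont : Continuous c) (hc_bdd : ∃ M, ∀ x, |c x| ≤ M)
    (ε : ℝ) (hε : 0 < ε)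
    (φ ψ : (j : Fin J) → X j → ℝ)
    (hφ : BddMeasTuple X φ) (hψ : BddMeasTuple X ψ)
    (hφmin : ∀ χ, BddMeasTuple X χ → dualObj X μ c ε φ ≤ dualObj X μ c ε χ)
    (hψmin : ∀ χ, BddMeasTuple X χ → dualObj X μ c ε ψ ≤ dualObj X μ c ε χ) :
    (∃ lam : Fin J → ℝ, (∑ j, lam j) = 0 ∧
        ∀ j, ψ j =ᵐ[μ j] fun x => φ j x + lam j) ∧
    ((∀ j : Fin J, (j : ℕ) < J - 1 → ∫ x, φ j x ∂(μ j) = 0) →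
      (∀ j : Fin J, (j : ℕ) < J - 1 → ∫ x, ψ j x ∂(μ j) = 0) →
      ∀ j, ψ j =ᵐ[μ j] φ j) :=
  dualObj_minimizers_unique_up_to_translation_general X μ c hc_cont hc_bdd ε hε φ ψ hφ hψ hφmin
    hψmin
end

section
/- Suppose the tuple of bounded measurable potentials φ = (φ_1,…,φ_J) satisfies the Schrödinger system: for every j, exp(φ_j(x_j)/ε) · ∫ exp((Σ_{i≠j} φ_i(x_i) − c(x))/ε) d(⊗_{i≠j} μ_i)(x_{−j}) = 1 for μ_j-almost every x_j ∈ X_j. Then the measure γ on X_1 × ⋯ × X_J defined by dγ(x) = exp((Σ_{j=1}^J φ_j(x_j) − c(x))/ε) d(μ_1 ⊗ ⋯ ⊗ μ_J)(x) is a probability measure whose j-th marginal (the pushforward of γ under the j-th coordinate projection) equals μ_j, for every j = 1,…,J. -/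
open MeasureTheory

/-- Glue a point `xj` in coordinate `j` together with a point `y` of the remaining
coordinates into a full configuration. -/
def glue {J : ℕ} {X : Fin J → Type*} (j : Fin J) (xj : X j)
    (y : (i : {i : Fin J // i ≠ j}) → X i.1) (i : Fin J) : X i :=
  if h : i = j then cast (congrArg X h.symm) xj else y ⟨i, h⟩

/-- The measurable equivalence splitting off the `j`-th coordinate. -/
noncomputable def splitEquiv {J : ℕ} {X : Fin J → Type*} [∀ i, MeasurableSpace (X i)]
    (j : Fin J) : ((i : Fin J) → X i) ≃ᵐ (X j × ((i : {i : Fin J // i ≠ j}) → X i.1)) :=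
  (MeasurableEquiv.piEquivPiSubtypeProd X (fun i => i = j)).trans
    ((MeasurableEquiv.piUnique fun i : {i : Fin J // i = j} => X i.1).prodCongr
      (MeasurableEquiv.refl _))

theorem splitEquiv_symm_eq_glue {J : ℕ} {X : Fin J → Type*} [∀ i, MeasurableSpace (X i)]
    (j : Fin J) (xj : X j) (y : (i : {i : Fin J // i ≠ j}) → X i.1) :
    (splitEquiv (X := X) j).symm (xj, y) = glue j xj y := by
  have h : (splitEquiv (X := X) j) (glue j xj y) = (xj, y) := by
    show ((MeasurableEquiv.piUnique fun i : {i : Fin J // i = j} => X i.1).prodCongr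
      (MeasurableEquiv.refl _)) ((MeasurableEquiv.piEquivPiSubtypeProd X (fun i => i = j))
        (glue j xj y)) = (xj, y)
    have h1 : (MeasurableEquiv.piEquivPiSubtypeProd X (fun i => i = j)) (glue j xj y)
        = (fun i : {i : Fin J // i = j} => glue j xj y i.1,
           fun i : {i : Fin J // ¬ i = j} => glue j xj y i.1) := rfl
    rw [h1]
    have h2 : ∀ p : ((i : {i : Fin J // i = j}) → X i.1) × ((i : {i : Fin J // ¬ i = j}) → X i.1),
        ((MeasurableEquiv.piUnique fun i : {i : Fin J // i = j} => X i.1).prodCongr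
          (MeasurableEquiv.refl _)) p = (p.1 default, p.2) := fun _ => rfl
    rw [h2]
    refine Prod.ext ?_ ?_
    · show glue j xj y j = xj
      simp [glue]
    · funext i
      show glue j xj y i.1 = y i
      simp [glue, i.2]
  rw [← h, MeasurableEquiv.symm_apply_apply]

theorem splitEquiv_measurePreserving {J : ℕ} {X : Fin J → Type*} [∀ i, MeasurableSpace (X i)]
    (μ : (j : Fin J) → Measure (X j)) [∀ j, IsProbabilityMeasure (μ j)] (j : Fin J) :
    MeasurePreserving (splitEquiv (X := X) j) (Measure.pi μ)
      ((μ j).prod (Measure.pi fun i : {i : Fin J // i ≠ j} => μ i.1)) := by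
  have h1 := measurePreserving_piEquivPiSubtypeProd μ (fun i => i = j)
  have h2 := (measurePreserving_piUnique fun i : {i : Fin J // i = j} => μ i.1).prod
    (MeasurePreserving.id (Measure.pi fun i : {i : Fin J // ¬ i = j} => μ i.1))
  rw [show (Fintype.subtypeEq j) = (Subtype.fintype fun i : Fin J => i = j) from
    Subsingleton.elim _ _] at h2
  exact h2.comp h1

theorem glue_sum {J : ℕ} {X : Fin J → Type*} (j : Fin J) (xj : X j)
    (y : (i : {i : Fin J // i ≠ j}) → X i.1) (φ : (i : Fin J) → X i → ℝ) :
    ∑ i, φ i (glue j xj y i)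
      = φ j xj + ∑ i : {i : Fin J // i ≠ j}, φ i.1 (y i) := by
  classical
  rw [← Finset.add_sum_erase _ (fun i => φ i (glue j xj y i)) (Finset.mem_univ j)]
  congr 1
  · simp [glue]
  · rw [Finset.sum_subtype (p := fun i => i ≠ j) (Finset.univ.erase j) (by simp)
      (fun i => φ i (glue j xj y i))]
    refine Finset.sum_congr rfl fun i _ => ?_
    simp [glue, i.2]

/-- If the bounded measurable potentials `φ` satisfy the Schrödinger
system, then the exponentially tilted product measure
`dγ = exp((∑_j φ_j(x_j) - c(x))/ε) d(⊗_j μ_j)` is a probability measure whose `j`-th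
marginal is `μ j` for every `j`. -/
theorem schrodinger_system_yields_coupling
    {d J : ℕ} (hJ : 2 ≤ J)
    (X : Fin J → Set (Fin d → ℝ)) (hX : ∀ j, IsCompact (X j))
    (μ : (j : Fin J) → Measure (X j)) [∀ j, IsProbabilityMeasure (μ j)]
    (c : ((j : Fin J) → X j) → ℝ)
    (hc_cont : Continuous c) (hc_bdd : ∃ M, ∀ x, |c x| ≤ M)
    (ε : ℝ) (hε : 0 < ε)
    (φ : (j : Fin J) → X j → ℝ)
    (hφ_meas : ∀ j, Measurable (φ j))
    (hφ_bdd : ∀ j, ∃ M, ∀ x, |φ j x| ≤ M)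
    (hSch : ∀ j, ∀ᵐ xj ∂(μ j),
      Real.exp (φ j xj / ε) *
        ∫ y, Real.exp (((∑ i : {i : Fin J // i ≠ j}, φ i.1 (y i)) - c (glue j xj y)) / ε)
          ∂(Measure.pi (fun i : {i : Fin J // i ≠ j} => μ i.1)) = 1) :
    IsProbabilityMeasure ((Measure.pi μ).withDensity
        (fun x => ENNReal.ofReal (Real.exp (((∑ j, φ j (x j)) - c x) / ε)))) ∧
    ∀ j, ((Measure.pi μ).withDensity
        (fun x => ENNReal.ofReal (Real.exp (((∑ j, φ j (x j)) - c x) / ε)))).map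
        (fun x => x j) = μ j := by
  classical
  set f : ((j : Fin J) → X j) → ENNReal :=
    fun x => ENNReal.ofReal (Real.exp (((∑ j, φ j (x j)) - c x) / ε)) with hfdef
  have hsum_meas : Measurable fun x : (j : Fin J) → X j => ∑ j, φ j (x j) :=
    Finset.measurable_sum _ fun j _ => (hφ_meas j).comp (measurable_pi_apply j)
  have hfmeas : Measurable f :=
    ENNReal.measurable_ofReal.comp (Real.measurable_exp.comp
      ((hsum_meas.sub hc_cont.measurable).div_const ε))
  obtain ⟨Mc, hMc⟩ := hc_bdd
  choose Mφ hMφ using hφ_bdd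
  have key : ∀ j, ((Measure.pi μ).withDensity f).map (fun x => x j) = μ j := by
    intro j
    set μ' : Measure ((i : {i : Fin J // i ≠ j}) → X i.1) :=
      Measure.pi fun i : {i : Fin J // i ≠ j} => μ i.1 with hμ'
    have hproj : Measurable fun x : (i : Fin J) → X i => x j := measurable_pi_apply j
    have hmp := splitEquiv_measurePreserving μ j
    set e := splitEquiv (X := fun i => ↥(X i)) j with he
    -- a.e. the inner integral is 1
    have hae : ∀ᵐ xj ∂(μ j), ∫⁻ y, f (glue j xj y) ∂μ' = 1 := by
      filter_upwards [hSch j] with xj hxj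
      set g : ((i : {i : Fin J // i ≠ j}) → X i.1) → ℝ := fun y =>
        Real.exp (((∑ i : {i : Fin J // i ≠ j}, φ i.1 (y i)) - c (glue j xj y)) / ε) with hg
      have hglue_meas : Measurable fun y => glue (X := fun i => ↥(X i)) j xj y := by
        have : (fun y => glue (X := fun i => ↥(X i)) j xj y) = fun y => e.symm (xj, y) := by
          funext y; rw [splitEquiv_symm_eq_glue]
        rw [this]
        exact e.symm.measurable.comp measurable_prodMk_left
      have hg_meas : Measurable g := by
        apply Real.measurable_exp.comp
        apply Measurable.div_const
        apply Measurable.sub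
        · exact Finset.measurable_sum _ fun i _ =>
            (hφ_meas i.1).comp (measurable_pi_apply i)
        · exact hc_cont.measurable.comp hglue_meas
      have hg_pos : ∀ y, 0 < g y := fun y => Real.exp_pos _
      have hg_int : Integrable g μ' := by
        refine (integrable_const (Real.exp (((∑ i : {i : Fin J // i ≠ j}, Mφ i.1) + Mc) / ε))).mono'
          hg_meas.aestronglyMeasurable (ae_of_all _ fun y => ?_)
        rw [Real.norm_eq_abs, abs_of_pos (hg_pos y)]
        apply Real.exp_le_exp.mpr
        apply (div_le_div_iff_of_pos_right hε).mpr
        have h1 : (∑ i : {i : Fin J // i ≠ j}, φ i.1 (y i)) ≤ ∑ i : {i : Fin J // i ≠ j}, Mφ i.1 :=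
          Finset.sum_le_sum fun i _ => (abs_le.mp (hMφ i.1 (y i))).2
        have h2 : -c (glue j xj y) ≤ Mc := neg_le_of_neg_le (abs_le.mp (hMc _)).1 |>.trans (le_refl _)
        linarith [(abs_le.mp (hMc (glue j xj y))).1]
      have hstep : ∀ y, f (glue j xj y)
          = ENNReal.ofReal (Real.exp (φ j xj / ε)) * ENNReal.ofReal (g y) := by
        intro y
        rw [hfdef]
        simp only
        rw [glue_sum j xj y φ, ← ENNReal.ofReal_mul (Real.exp_pos _).le, ← Real.exp_add]
        congr 2
        field_simp
        ring
      calc ∫⁻ y, f (glue j xj y) ∂μ'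
          = ∫⁻ y, ENNReal.ofReal (Real.exp (φ j xj / ε)) * ENNReal.ofReal (g y) ∂μ' :=
            lintegral_congr hstep
        _ = ENNReal.ofReal (Real.exp (φ j xj / ε)) * ∫⁻ y, ENNReal.ofReal (g y) ∂μ' :=
            lintegral_const_mul _ (ENNReal.measurable_ofReal.comp hg_meas)
        _ = ENNReal.ofReal (Real.exp (φ j xj / ε)) * ENNReal.ofReal (∫ y, g y ∂μ') := by
            rw [← ofReal_integral_eq_lintegral_ofReal hg_int
              (ae_of_all _ fun y => (hg_pos y).le)]
        _ = ENNReal.ofReal (Real.exp (φ j xj / ε) * ∫ y, g y ∂μ') :=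
            (ENNReal.ofReal_mul (Real.exp_pos _).le).symm
        _ = 1 := by rw [hxj, ENNReal.ofReal_one]
    refine Measure.ext fun A hA => ?_
    rw [Measure.map_apply hproj hA, withDensity_apply _ (hproj hA)]
    have hcomp := (MeasurePreserving.symm e hmp).setLIntegral_comp_preimage_emb
      e.symm.measurableEmbedding f ((fun x => x j) ⁻¹' A)
    have hpre : ⇑e.symm ⁻¹' ((fun x => x j) ⁻¹' A) = A ×ˢ Set.univ := by
      ext ⟨xj, y⟩
      simp only [Set.mem_preimage, Set.mem_prod, Set.mem_univ, and_true]
      rw [splitEquiv_symm_eq_glue]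
      have : glue (X := fun i => ↥(X i)) j xj y j = xj := by simp [glue]
      rw [this]
    rw [← hcomp, hpre, ← Measure.restrict_prod_eq_prod_univ]
    rw [lintegral_prod (fun p => f (e.symm p)) ((hfmeas.comp e.symm.measurable).aemeasurable)]
    have : ∀ᵐ xj ∂((μ j).restrict A), ∫⁻ y, f (e.symm (xj, y)) ∂μ' = 1 := by
      refine ae_restrict_of_ae ?_
      filter_upwards [hae] with xj hxj
      rw [← hxj]
      exact lintegral_congr fun y => by rw [splitEquiv_symm_eq_glue]
    rw [lintegral_congr_ae this, lintegral_one, Measure.restrict_apply_univ]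
  refine ⟨?_, key⟩
  have j0 : Fin J := ⟨0, lt_of_lt_of_le two_pos hJ⟩
  constructor
  have h1 : ((Measure.pi μ).withDensity f) Set.univ
      = (((Measure.pi μ).withDensity f).map (fun x => x j0)) Set.univ := by
    rw [Measure.map_apply (measurable_pi_apply j0) MeasurableSet.univ, Set.preimage_univ]
  rw [h1, key j0]
  exact measure_univ
end

section
/- Let (Ω, 𝓕, P) be a probability space, X : Ω → ℝ^d a random vector generating the σ-algebra σ(X), D : Ω → {0,1} a binary random variable, and Y an integrable random variable. Assume (weak unconfoundedness) that Y and D are conditionally independent given σ(X), and (overlap) that E[D | σ(X)] > 0 almost surely. Then E[Y] = E[ E[Y·D | σ(X)] / E[D | σ(X)] ]. -/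
/-!
Write `D = 𝟙_A` with `A = {D = 1}`. Conditional independence of `Y` and `A` given `σ(X)` says that
also conditioning on `Y` does not change the conditional probability of `A`:
`P(A | σ(X) ⊔ σ(Y)) = P(A | σ(X))`, which it suffices to check on the π-system of sets `s ∩ t`.
The tower property and pulling out `Y` then give `E[Y D | σ(X)] = E[Y | σ(X)] · E[D | σ(X)]`, so
under overlap the integrand on the right is `E[Y | σ(X)]` almost surely, whose mean is `E[Y]`.
-/

open MeasureTheory ProbabilityTheory MeasurableSpace

namespace MeasurableSpace

variable {Ω : Type*}

theorem isPiSystem_image2_inter (m₁ m₂ : MeasurableSpace Ω) :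
    IsPiSystem (Set.image2 (· ∩ ·) {s | MeasurableSet[m₁] s} {t | MeasurableSet[m₂] t}) := by
  rintro _ ⟨s₁, hs₁, t₁, ht₁, rfl⟩ _ ⟨s₂, hs₂, t₂, ht₂, rfl⟩ -
  exact ⟨s₁ ∩ s₂, hs₁.inter hs₂, t₁ ∩ t₂, ht₁.inter ht₂, Set.inter_inter_inter_comm _ _ _ _⟩

theorem sup_eq_generateFrom_image2_inter (m₁ m₂ : MeasurableSpace Ω) :
    m₁ ⊔ m₂ =
      generateFrom (Set.image2 (· ∩ ·) {s | MeasurableSet[m₁] s} {t | MeasurableSet[m₂] t}) := by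
  refine le_antisymm (sup_le (fun s hs => ?_) (fun t ht => ?_)) (generateFrom_le ?_)
  · exact measurableSet_generateFrom ⟨s, hs, Set.univ, .univ, Set.inter_univ s⟩
  · exact measurableSet_generateFrom ⟨Set.univ, .univ, t, ht, Set.univ_inter t⟩
  · rintro _ ⟨s, hs, t, ht, rfl⟩
    exact MeasurableSet.inter (le_sup_left (b := m₂) s hs) (le_sup_right (a := m₁) t ht)

end MeasurableSpace

theorem MeasureTheory.setIntegral_eq_setIntegral_of_isPiSystem_of_univ_mem {Ω : Type*}
    {m mΩ : MeasurableSpace Ω} {μ : Measure Ω} (hm : m ≤ mΩ) {S : Set (Set Ω)}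
    (h_eq : m = generateFrom S) (h_pi : IsPiSystem S) (h_univ : Set.univ ∈ S) {f g : Ω → ℝ}
    (hf : Integrable f μ) (hg : Integrable g μ)
    (basic : ∀ t ∈ S, ∫ ω in t, f ω ∂μ = ∫ ω in t, g ω ∂μ) {t : Set Ω} (ht : MeasurableSet[m] t) :
    ∫ ω in t, f ω ∂μ = ∫ ω in t, g ω ∂μ := by
  induction t, ht using induction_on_inter h_eq h_pi with
  | empty => simp
  | basic t ht => exact basic t ht
  | compl t ht h =>
    have h_total := basic _ h_univ
    rw [setIntegral_univ, setIntegral_univ] at h_total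
    rw [setIntegral_compl (hm t ht) hf, setIntegral_compl (hm t ht) hg, h, h_total]
  | iUnion u hdisj hmeas h =>
    rw [integral_iUnion (fun i => hm _ (hmeas i)) hdisj hf.integrableOn,
      integral_iUnion (fun i => hm _ (hmeas i)) hdisj hg.integrableOn]
    exact tsum_congr h

namespace ProbabilityTheory

variable {Ω : Type*} {m m₁ m₂ mΩ : MeasurableSpace Ω} [StandardBorelSpace Ω] {μ : Measure Ω}
  [IsFiniteMeasure μ] {A : Set Ω}

theorem CondIndep.condExp_indicator_sup_ae_eq (hm : m ≤ mΩ) (hm₁ : m₁ ≤ mΩ) (hm₂ : m₂ ≤ mΩ)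
    (h : CondIndep m m₁ m₂ hm μ) (hA : MeasurableSet[m₂] A) :
    μ⟦A | m ⊔ m₁⟧ =ᵐ[μ] μ⟦A | m⟧ := by
  have hA_int : Integrable (A.indicator fun _ => (1 : ℝ)) μ :=
    (integrable_const 1).indicator (hm₂ A hA)
  refine (ae_eq_condExp_of_forall_setIntegral_eq (sup_le hm hm₁) hA_int
    (fun _ _ _ => integrable_condExp.integrableOn) (fun u hu _ => ?_)
    (stronglyMeasurable_condExp.mono (le_sup_left : m ≤ m ⊔ m₁)).aestronglyMeasurable).symm
  refine setIntegral_eq_setIntegral_of_isPiSystem_of_univ_mem (sup_le hm hm₁)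
    (sup_eq_generateFrom_image2_inter m m₁) (isPiSystem_image2_inter m m₁)
    ⟨_, .univ, _, .univ, Set.inter_univ _⟩ integrable_condExp hA_int ?_ hu
  rintro _ ⟨s, hs, t, ht, rfl⟩
  have h_factor : μ⟦t ∩ A | m⟧ =ᵐ[μ] μ⟦t | m⟧ * μ⟦A | m⟧ :=
    (condIndep_iff m m₁ m₂ hm hm₁ hm₂ μ).1 h t A ht hA
  have ht' := hm₁ t ht
  have h_mul : t.indicator (μ⟦A | m⟧) = μ⟦A | m⟧ * t.indicator fun _ => 1 := by
    ext ω
    by_cases hω : ω ∈ t <;> simp [hω]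
  have h_pull : μ[t.indicator (μ⟦A | m⟧) | m] =ᵐ[μ] μ⟦A | m⟧ * μ⟦t | m⟧ := by
    rw [h_mul]
    exact condExp_mul_of_stronglyMeasurable_left stronglyMeasurable_condExp
      (h_mul ▸ integrable_condExp.indicator ht') ((integrable_const 1).indicator ht')
  calc ∫ ω in s ∩ t, (μ⟦A | m⟧) ω ∂μ
      = ∫ ω in s, μ[t.indicator (μ⟦A | m⟧) | m] ω ∂μ := by
        rw [setIntegral_condExp hm (integrable_condExp.indicator ht') hs,
          setIntegral_indicator ht']
    _ = ∫ ω in s, (μ⟦t ∩ A | m⟧) ω ∂μ := by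
        refine setIntegral_congr_ae (hm s hs) ?_
        filter_upwards [h_pull, h_factor] with ω h₁ h₂ _
        rw [h₁, h₂, Pi.mul_apply, Pi.mul_apply, mul_comm]
    _ = ∫ ω in s ∩ t, A.indicator (fun _ => (1 : ℝ)) ω ∂μ := by
        rw [setIntegral_condExp hm ((integrable_const 1).indicator (ht'.inter (hm₂ A hA))) hs,
          ← Set.indicator_indicator, setIntegral_indicator ht']

theorem CondIndep.condExp_mul_indicator_ae_eq (hm : m ≤ mΩ) (hm₁ : m₁ ≤ mΩ) (hm₂ : m₂ ≤ mΩ)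
    (h : CondIndep m m₁ m₂ hm μ) {Y : Ω → ℝ} (hY : StronglyMeasurable[m₁] Y)
    (hY_int : Integrable Y μ) (hA : MeasurableSet[m₂] A) :
    μ[Y * A.indicator (fun _ => 1) | m] =ᵐ[μ] μ[Y | m] * μ⟦A | m⟧ := by
  have hA_int : Integrable (A.indicator fun _ => (1 : ℝ)) μ :=
    (integrable_const 1).indicator (hm₂ A hA)
  have hA_le : ∀ ω, |A.indicator (fun _ => (1 : ℝ)) ω| ≤ 1 := fun ω => by
    by_cases hω : ω ∈ A <;> simp [hω]
  have hYA_int : Integrable (Y * A.indicator fun _ => 1) μ :=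
    hY_int.mul_bdd hA_int.aestronglyMeasurable (ae_of_all _ hA_le)
  have h_bound : ∀ᵐ ω ∂μ, ‖(μ⟦A | m⟧) ω‖ ≤ 1 :=
    ae_bdd_abs_condExp_of_ae_bdd_abs (ae_of_all _ hA_le)
  calc μ[Y * A.indicator (fun _ => 1) | m]
      =ᵐ[μ] μ[μ[Y * A.indicator (fun _ => 1) | m ⊔ m₁] | m] :=
        (condExp_condExp_of_le le_sup_left (sup_le hm hm₁)).symm
    _ =ᵐ[μ] μ[Y * μ⟦A | m ⊔ m₁⟧ | m] :=
        condExp_congr_ae (condExp_mul_of_stronglyMeasurable_left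
          (hY.mono le_sup_right) hYA_int hA_int)
    _ =ᵐ[μ] μ[μ⟦A | m⟧ * Y | m] := by
        refine condExp_congr_ae ?_
        filter_upwards [h.condExp_indicator_sup_ae_eq hm hm₁ hm₂ hA] with ω hω
        rw [Pi.mul_apply, Pi.mul_apply, hω, mul_comm]
    _ =ᵐ[μ] μ⟦A | m⟧ * μ[Y | m] :=
        condExp_stronglyMeasurable_mul_of_bound hm stronglyMeasurable_condExp hY_int 1 h_bound
    _ = μ[Y | m] * μ⟦A | m⟧ := mul_comm _ _

end ProbabilityTheory

/-- Identification of the expected potential outcome: if `Y` and the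
binary treatment indicator `D` are conditionally independent given `σ(X)` (weak
unconfoundedness) and `E[D | σ(X)] > 0` a.s. (overlap), then
`E[Y] = E[ E[Y·D | σ(X)] / E[D | σ(X)] ]`. -/
theorem expected_potential_outcome_identification
    {Ω : Type*} [MeasurableSpace Ω] [StandardBorelSpace Ω] {d : ℕ}
    (P : Measure Ω) [IsProbabilityMeasure P]
    (X : Ω → (Fin d → ℝ)) (hX : Measurable X)
    (D : Ω → ℝ) (hD : Measurable D) (hD01 : ∀ ω, D ω = 0 ∨ D ω = 1)
    (Y : Ω → ℝ) (hY_meas : Measurable Y) (hY_int : Integrable Y P)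
    (hindep : CondIndepFun (MeasurableSpace.comap X inferInstance) hX.comap_le Y D P)
    (hoverlap : ∀ᵐ ω ∂P, 0 < (P[D | MeasurableSpace.comap X inferInstance]) ω) :
    ∫ ω, Y ω ∂P =
      ∫ ω, (P[fun ω' => Y ω' * D ω' | MeasurableSpace.comap X inferInstance]) ω /
        (P[D | MeasurableSpace.comap X inferInstance]) ω ∂P := by
  set m : MeasurableSpace Ω := MeasurableSpace.comap X inferInstance
  have hD_indicator : D = (D ⁻¹' {1}).indicator fun _ => 1 := by
    ext ω
    rcases hD01 ω with h | h <;> simp [h]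
  have h_factor : P[fun ω => Y ω * D ω | m] =ᵐ[P] P[Y | m] * P[D | m] := by
    rw [hD_indicator]
    exact ((condIndepFun_iff_condIndep _ _ _ _ _).1 hindep).condExp_mul_indicator_ae_eq
      hX.comap_le hY_meas.comap_le hD.comap_le (comap_measurable Y).stronglyMeasurable hY_int
      ⟨{1}, measurableSet_singleton 1, rfl⟩
  have h_ratio : (fun ω => (P[fun ω' => Y ω' * D ω' | m]) ω / (P[D | m]) ω) =ᵐ[P] P[Y | m] := by
    filter_upwards [h_factor, hoverlap] with ω h_eq h_pos
    rw [h_eq, Pi.mul_apply, mul_div_cancel_right₀ _ h_pos.ne']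
  rw [integral_congr_ae h_ratio, integral_condExp hX.comap_le]
end
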